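/- Assume the IFS is a fractal of unity and the fixed points p_1,…,p_n are not all equal. Then every extremal point of the attractor F is eventually focal: for every e ∈ Ext(F) there exist a finite word b and a nonempty focal word x over {1,…,n} such that e = T_b(p_x). -/

import Mathlib

/-!
Iterating `F = ⋃ T_k(F)` writes `e = T_a(w)` with `w ∈ F` and `a` a word of length `M`. The
phases `φ_u / |φ_u|` of the `M + 1` prefixes `u` of `a` are `M`-th roots of unity, so two of them
coincide and `a = b x c` with `φ_x > 0`. Since `T_b` is an injective affine self-map of `F`,
`z = T_x(T_c w)` is extremal along with `e = T_b z`; and since `T_x` is a homothety of ratio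
`φ_x ∈ (0, 1)` about `p_x`, `z` lies strictly between `T_c w` and `T_x z` unless `T_c w = p_x`.
Hence `e = T_b(p_x)`.
-/

open Complex

noncomputable section

/-- Composition of IFS maps along a finite word: `T_a = T_{a₁} ∘ ⋯ ∘ T_{a_L}`. -/
def wordMap {n : ℕ} (T : Fin n → ℂ → ℂ) : List (Fin n) → ℂ → ℂ
  | [] => id
  | k :: a => T k ∘ wordMap T a

/-- Product of factors along a finite word: `φ_a = φ_{a₁} ⋯ φ_{a_L}`. -/
def wordFactor {n : ℕ} (φ : Fin n → ℂ) (a : List (Fin n)) : ℂ :=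
  (a.map φ).prod

/-- `e` is an extremal point of `S`: it belongs to `S` and does not lie in the open
segment between any two distinct points of `S`. -/
def IsExtremal (S : Set ℂ) (e : ℂ) : Prop :=
  e ∈ S ∧ ¬ ∃ s₁ s₂ : ℂ, s₁ ∈ S ∧ s₂ ∈ S ∧ s₁ ≠ s₂ ∧
    ∃ t : ℝ, 0 < t ∧ t < 1 ∧ e = t • s₁ + (1 - t) • s₂

section Words

variable {n : ℕ}

lemma wordMap_append (T : Fin n → ℂ → ℂ) (a b : List (Fin n)) (z : ℂ) :
    wordMap T (a ++ b) z = wordMap T a (wordMap T b z) := by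
  induction a with
  | nil => rfl
  | cons k a ih => exact congrArg (T k) ih

lemma wordFactor_cons (φ : Fin n → ℂ) (k : Fin n) (a : List (Fin n)) :
    wordFactor φ (k :: a) = φ k * wordFactor φ a := by
  simp [wordFactor]

lemma wordFactor_append (φ : Fin n → ℂ) (a b : List (Fin n)) :
    wordFactor φ (a ++ b) = wordFactor φ a * wordFactor φ b := by
  simp [wordFactor]

lemma wordFactor_ne_zero {φ : Fin n → ℂ} (hφ : ∀ k, φ k ≠ 0) (a : List (Fin n)) :
    wordFactor φ a ≠ 0 := by
  simpa [wordFactor] using fun k _ => hφ k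

lemma norm_wordFactor_le_one {φ : Fin n → ℂ} (hφ : ∀ k, ‖φ k‖ ≤ 1) (a : List (Fin n)) :
    ‖wordFactor φ a‖ ≤ 1 := by
  induction a with
  | nil => simp [wordFactor]
  | cons k a ih =>
    rw [wordFactor_cons, norm_mul]
    exact mul_le_one₀ (hφ k) (norm_nonneg _) ih

lemma norm_wordFactor_lt_one {φ : Fin n → ℂ} (hφ : ∀ k, ‖φ k‖ < 1) {a : List (Fin n)}
    (ha : a ≠ []) : ‖wordFactor φ a‖ < 1 := by
  obtain ⟨k, a, rfl⟩ := List.exists_cons_of_ne_nil ha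
  rw [wordFactor_cons, norm_mul]
  exact mul_lt_one_of_nonneg_of_lt_one_left (norm_nonneg _) (hφ k)
    (norm_wordFactor_le_one (fun k => (hφ k).le) a)

lemma wordMap_sub_wordMap {T : Fin n → ℂ → ℂ} {p φ : Fin n → ℂ}
    (hT : ∀ k z, T k z = p k + φ k * (z - p k)) (a : List (Fin n)) (z w : ℂ) :
    wordMap T a z - wordMap T a w = wordFactor φ a * (z - w) := by
  induction a with
  | nil => simp [wordMap, wordFactor]
  | cons k a ih =>
    change T k (wordMap T a z) - T k (wordMap T a w) = _
    rw [hT, hT, wordFactor_cons]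
    linear_combination φ k * ih

lemma mapsTo_wordMap {T : Fin n → ℂ → ℂ} {F : Set ℂ} (hF : ⋃ k, T k '' F ⊆ F)
    (a : List (Fin n)) : Set.MapsTo (wordMap T a) F F := by
  induction a with
  | nil => exact Set.mapsTo_id F
  | cons k a ih =>
    have hTk : Set.MapsTo (T k) F F := fun z hz =>
      hF (Set.mem_iUnion_of_mem k (Set.mem_image_of_mem _ hz))
    exact hTk.comp ih

lemma exists_wordMap_eq_of_mem {T : Fin n → ℂ → ℂ} {F : Set ℂ} (hF : F ⊆ ⋃ k, T k '' F)
    {e : ℂ} (he : e ∈ F) (L : ℕ) :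
    ∃ a w, a.length = L ∧ w ∈ F ∧ e = wordMap T a w := by
  induction L with
  | zero => exact ⟨[], e, rfl, he, rfl⟩
  | succ L ih =>
    obtain ⟨a, w, rfl, hw, rfl⟩ := ih
    obtain ⟨k, v, hv, rfl⟩ := Set.mem_iUnion.1 (hF hw)
    exact ⟨a ++ [k], v, by simp, hv, (wordMap_append T a [k] v).symm⟩

end Words

section Extremal

variable {S : Set ℂ} {f : ℂ → ℂ} {w : ℂ}

lemma IsExtremal.of_affine {c : ℂ} (hf : ∀ s s', f s - f s' = c * (s - s')) (hc : c ≠ 0)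
    (hS : Set.MapsTo f S S) (hw : w ∈ S) (he : IsExtremal S (f w)) : IsExtremal S w := by
  refine ⟨hw, ?_⟩
  rintro ⟨s₁, s₂, h₁, h₂, hne, t, ht0, ht1, rfl⟩
  refine he.2 ⟨f s₁, f s₂, hS h₁, hS h₂, fun h => hne ?_, t, ht0, ht1, ?_⟩
  · have h₁₂ := hf s₁ s₂
    rw [h, sub_self, zero_eq_mul] at h₁₂
    exact sub_eq_zero.1 (h₁₂.resolve_left hc)
  · simp only [Complex.real_smul]
    push_cast
    linear_combination hf (t * s₁ + (1 - t) * s₂) s₂ - t * hf s₁ s₂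

/-- If `f w = p + ρ (w - p)` with `w ≠ p`, then `f w` lies strictly between `w` and
`f (f w) = p + ρ² (w - p)`, with weight `ρ / (1 + ρ)` on `w`. -/
lemma IsExtremal.eq_of_homothety {p : ℂ} {ρ : ℝ} (hfp : f p = p)
    (hf : ∀ s s', f s - f s' = ρ * (s - s')) (hρ0 : 0 < ρ) (hρ1 : ρ < 1)
    (hS : Set.MapsTo f S S) (hw : w ∈ S) (he : IsExtremal S (f w)) : w = p := by
  by_contra hne
  have h₁ : f w - p = ρ * (w - p) := by
    linear_combination hf w p + hfp
  have h₂ : f (f w) - p = ρ ^ 2 * (w - p) := by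
    linear_combination hf (f w) p + hfp + ρ * h₁
  refine he.2 ⟨w, f (f w), hw, hS (hS hw), fun h => hne ?_, ρ / (1 + ρ),
    by positivity, by rw [div_lt_one (by positivity)]; linarith, ?_⟩
  · have hρ2 : (1 - ρ ^ 2 : ℂ) ≠ 0 := by
      norm_cast; nlinarith
    have : (1 - ρ ^ 2 : ℂ) * (w - p) = 0 := by linear_combination h + h₂
    exact sub_eq_zero.1 ((mul_eq_zero.1 this).resolve_left hρ2)
  · have hρ' : (1 + ρ : ℂ) ≠ 0 := by norm_cast; linarith
    simp only [Complex.real_smul]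
    push_cast
    field_simp
    linear_combination (1 + ρ) * h₁ - h₂

end Extremal

section Phase

open Polynomial

lemma pow_eq_norm_pow_of_eq_mul_exp {z : ℂ} {M N : ℕ} (hM : M ≠ 0)
    (hz : z = ‖z‖ * exp (((2 * Real.pi * N / M : ℝ) : ℂ) * I)) : z ^ M = ‖z‖ ^ M := by
  have hrot : exp (((2 * Real.pi * N / M : ℝ) : ℂ) * I) ^ M = 1 := by
    have hM' : (M : ℂ) ≠ 0 := Nat.cast_ne_zero.2 hM
    rw [← exp_nat_mul, ← exp_nat_mul_two_pi_mul_I N]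
    congr 1
    push_cast
    field_simp
  conv_lhs => rw [hz]
  rw [mul_pow, hrot, mul_one]

lemma wordFactor_pow_eq_norm_pow {n M : ℕ} {φ : Fin n → ℂ} (hφ : ∀ k, φ k ^ M = ‖φ k‖ ^ M)
    (a : List (Fin n)) : wordFactor φ a ^ M = ‖wordFactor φ a‖ ^ M := by
  induction a with
  | nil => simp [wordFactor]
  | cons k a ih => rw [wordFactor_cons, norm_mul, mul_pow, ih, hφ, ofReal_mul, mul_pow]

lemma eq_norm_of_div_norm_eq {w v : ℂ} (hw : w ≠ 0) (h : w / ‖w‖ = w * v / ‖w * v‖) :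
    v = ‖v‖ := by
  rcases eq_or_ne v 0 with rfl | hv
  · simp
  have hw' : (‖w‖ : ℂ) ≠ 0 := by simpa using hw
  have hv' : (‖v‖ : ℂ) ≠ 0 := by simpa using hv
  rw [norm_mul, ofReal_mul] at h
  field_simp at h
  exact h.symm

def IsFocal {n : ℕ} (φ : Fin n → ℂ) (x : List (Fin n)) : Prop :=
  x ≠ [] ∧ ∃ r : ℝ, 0 < r ∧ wordFactor φ x = r

lemma exists_isFocal_infix {n M : ℕ} {φ : Fin n → ℂ} (hM : 0 < M) (hφ0 : ∀ k, φ k ≠ 0)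
    (hφ : ∀ k, φ k ^ M = ‖φ k‖ ^ M) {a : List (Fin n)} (ha : M ≤ a.length) :
    ∃ b x c, a = b ++ x ++ c ∧ IsFocal φ x := by
  classical
  set phase : ℕ → ℂ := fun j => wordFactor φ (a.take j) / ‖wordFactor φ (a.take j)‖
  have hroot : ∀ j ∈ Finset.range (M + 1), phase j ∈ nthRootsFinset M (1 : ℂ) := by
    intro j _
    have hnorm : (‖wordFactor φ (a.take j)‖ : ℂ) ^ M ≠ 0 :=
      pow_ne_zero M (ofReal_ne_zero.2 (norm_ne_zero_iff.2 (wordFactor_ne_zero hφ0 _)))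
    rw [mem_nthRootsFinset hM, div_pow, wordFactor_pow_eq_norm_pow hφ, div_self hnorm]
  have hcard : (nthRootsFinset M (1 : ℂ)).card < (Finset.range (M + 1)).card := by
    rw [Finset.card_range, nthRootsFinset_def]
    exact Nat.lt_succ_of_le ((Multiset.toFinset_card_le _).trans (card_nthRoots M 1))
  obtain ⟨i, hi, j, hj, hij, hphase⟩ := Finset.exists_ne_map_eq_of_card_lt_of_maps_to hcard hroot
  wlog hlt : i < j generalizing i j
  · exact this j hj i hi hij.symm hphase.symm (by omega)
  have hsplit : a.take j = a.take i ++ (a.take j).drop i := by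
    conv_lhs => rw [← List.take_append_drop i (a.take j), List.take_take, min_eq_left hlt.le]
  refine ⟨a.take i, (a.take j).drop i, a.drop j, by rw [← hsplit, List.take_append_drop], ?_,
    ‖wordFactor φ ((a.take j).drop i)‖, norm_pos_iff.2 (wordFactor_ne_zero hφ0 _), ?_⟩
  · rw [← List.length_pos_iff, List.length_drop, List.length_take]
    simp only [Finset.mem_range] at hj
    omega
  · refine eq_norm_of_div_norm_eq (wordFactor_ne_zero hφ0 (a.take i)) ?_
    rw [← wordFactor_append, ← hsplit]
    exact hphase

end Phase

theorem extremal_eventually_focal_general {n : ℕ} (p φ : Fin n → ℂ)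
    (hφ : ∀ k, 0 < ‖φ k‖ ∧ ‖φ k‖ < 1)
    (T : Fin n → ℂ → ℂ) (hT : ∀ k z, T k z = p k + φ k * (z - p k))
    (F : Set ℂ)
    (hFinv : F = ⋃ k, T k '' F)
    (M : ℕ) (hM : 1 ≤ M) (N : Fin n → ℕ)
    (hunity : ∀ k, φ k = (‖φ k‖ : ℂ) *
      Complex.exp ((((2 * Real.pi * (N k : ℝ)) / (M : ℝ) : ℝ) : ℂ) * Complex.I))
    (pp : List (Fin n) → ℂ) (hpp : ∀ x, x ≠ [] → wordMap T x (pp x) = pp x) :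
    ∀ e, IsExtremal F e → ∃ (b x : List (Fin n)), x ≠ [] ∧
      (∃ r : ℝ, 0 < r ∧ wordFactor φ x = (r : ℂ)) ∧
      e = wordMap T b (pp x) := by
  intro e he
  have hφ0 : ∀ k, φ k ≠ 0 := fun k => norm_pos_iff.1 (hφ k).1
  have hmaps := mapsTo_wordMap hFinv.ge
  obtain ⟨a, w, hlen, hw, rfl⟩ := exists_wordMap_eq_of_mem hFinv.le he.1 M
  obtain ⟨b, x, c, rfl, hxne, r, hr, hφx⟩ := exists_isFocal_infix hM hφ0
    (fun k => pow_eq_norm_pow_of_eq_mul_exp (by omega) (hunity k)) hlen.ge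
  rw [wordMap_append, wordMap_append] at he ⊢
  have hr1 : r < 1 := by
    simpa [hφx, abs_of_pos hr] using norm_wordFactor_lt_one (fun k => (hφ k).2) hxne
  have hfix : wordMap T c w = pp x :=
    (he.of_affine (wordMap_sub_wordMap hT b) (wordFactor_ne_zero hφ0 b) (hmaps b)
        (hmaps x (hmaps c hw))).eq_of_homothety (hpp x hxne)
      (fun s s' => hφx ▸ wordMap_sub_wordMap hT x s s') hr hr1 (hmaps x) (hmaps c hw)
  exact ⟨b, x, hxne, ⟨r, hr, hφx⟩, by rw [hfix, hpp x hxne]⟩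

/-- in a fractal of unity (all rotation angles rational multiples of `2π`)
with not all fixed points equal, every extremal point of `F` is eventually focal:
`e = T_b(p_x)` for some finite word `b` and nonempty focal word `x`. -/
theorem extremal_eventually_focal {n : ℕ} (hn : 1 ≤ n) (p φ : Fin n → ℂ)
    (hφ : ∀ k, 0 < ‖φ k‖ ∧ ‖φ k‖ < 1)
    (T : Fin n → ℂ → ℂ) (hT : ∀ k z, T k z = p k + φ k * (z - p k))
    (F : Set ℂ) (hFne : F.Nonempty) (hFc : IsCompact F)
    (hFinv : F = ⋃ k, T k '' F)
    (hne : ∃ i j, p i ≠ p j)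
    (M : ℕ) (hM : 1 ≤ M) (N : Fin n → ℕ) (hN : ∀ k, N k < M)
    (hunity : ∀ k, φ k = (‖φ k‖ : ℂ) *
      Complex.exp ((((2 * Real.pi * (N k : ℝ)) / (M : ℝ) : ℝ) : ℂ) * Complex.I))
    (pp : List (Fin n) → ℂ) (hpp : ∀ x, x ≠ [] → wordMap T x (pp x) = pp x) :
    ∀ e, IsExtremal F e → ∃ (b x : List (Fin n)), x ≠ [] ∧
      (∃ r : ℝ, 0 < r ∧ wordFactor φ x = (r : ℂ)) ∧
      e = wordMap T b (pp x) :=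
  extremal_eventually_focal_general p φ hφ T hT F hFinv M hM N hunity pp hpp
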